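/- arXiv:0809.0397 — 8 statements merged into one kernel-verified Lean document; each statement's English description precedes it below -/
import Mathlib

section
/- Define Q^{ijk}_{nm} = f^{(i+j+1-m),k}_n · f^{ij}_m + f^{(i+j+1-n),k}_m · f^{ij}_n, where f^{ab}_c = 1 - s_{a-c} - s_{b-c} and s is the step function (s_k = 1 for k ≥ 0, else 0). Then for any nonnegative integers n, m, the quantity Q^{ijk}_{nm} is symmetric under all permutations of the indices i, j, k. -/
set_option maxHeartbeats 4000000

/-- The step function: `s k = 1` for `k ≥ 0`, `s k = 0` for `k < 0`. -/
def stepFn (k : ℤ) : ℤ := if 0 ≤ k then 1 else 0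

/-- `f^{ab}_c = 1 - s_{a-c} - s_{b-c}`. -/
def fConst (a b c : ℤ) : ℤ := 1 - stepFn (a - c) - stepFn (b - c)

/-- `Q^{ijk}_{nm} = f^{(i+j+1-m),k}_n · f^{ij}_m + f^{(i+j+1-n),k}_m · f^{ij}_n`. -/
def Qconst (i j k n m : ℤ) : ℤ :=
  fConst (i + j + 1 - m) k n * fConst i j m + fConst (i + j + 1 - n) k m * fConst i j n

lemma Qswap12 (i j k n m : ℤ) : Qconst j i k n m = Qconst i j k n m := by
  simp only [Qconst, fConst, stepFn]
  split_ifs <;> omega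

lemma Qswap23 (i j k n m : ℤ) : Qconst i k j n m = Qconst i j k n m := by
  simp only [Qconst, fConst, stepFn]
  split_ifs <;> omega

lemma Qswap13 (i j k n m : ℤ) : Qconst k j i n m = Qconst i j k n m := by
  rw [Qswap12, Qswap23, Qswap12]

/-- `Q^{ijk}_{nm}` is symmetric under every permutation of the indices `i, j, k`. -/
theorem stmt_2 (n m : ℤ) (hn : 0 ≤ n) (hm : 0 ≤ m)
    (v : Fin 3 → ℤ) (hv : ∀ t, 0 ≤ v t) (σ : Equiv.Perm (Fin 3)) :
    Qconst (v (σ 0)) (v (σ 1)) (v (σ 2)) n m = Qconst (v 0) (v 1) (v 2) n m := by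
  have h0 : σ 0 = 0 ∨ σ 0 = 1 ∨ σ 0 = 2 := by omega
  have h1 : σ 1 = 0 ∨ σ 1 = 1 ∨ σ 1 = 2 := by omega
  have h2 : σ 2 = 0 ∨ σ 2 = 1 ∨ σ 2 = 2 := by omega
  have hne01 : σ 0 ≠ σ 1 := fun h => by simpa using σ.injective h
  have hne02 : σ 0 ≠ σ 2 := fun h => by simpa using σ.injective h
  have hne12 : σ 1 ≠ σ 2 := fun h => by simpa using σ.injective h
  rcases h0 with h0 | h0 | h0 <;> rcases h1 with h1 | h1 | h1 <;>
    rcases h2 with h2 | h2 | h2 <;>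
    simp_all [Qswap12, Qswap23, Qswap13] <;>
    rw [← Qswap12 (v 0), Qswap23, Qswap12] <;> try rfl
end

section
/- With s the step function and f^{ab}_c = 1 - s_{a-c} - s_{b-c}, the quantity Q^{ijk}_{nm} = f^{(i+j+1-m),k}_n·f^{ij}_m + f^{(i+j+1-n),k}_m·f^{ij}_n equals 2 - s_{i-n} - s_{i-m} - s_{j-n} - s_{j-m} - s_{k-n} - s_{k-m} + s_{k-n}s_{i-m} + s_{k-n}s_{j-m} + s_{k-m}s_{i-n} + s_{k-m}s_{j-n} + s_{i-n}s_{j-m} + s_{i-m}s_{j-n}, for all nonnegative integers i, j, k, n, m. -/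
theorem stmt_3 (i j k n m : ℤ) (hi : 0 ≤ i) (hj : 0 ≤ j) (hk : 0 ≤ k)
    (hn : 0 ≤ n) (hm : 0 ≤ m) :
    Qconst i j k n m =
      2 - stepFn (i - n) - stepFn (i - m) - stepFn (j - n) - stepFn (j - m)
        - stepFn (k - n) - stepFn (k - m)
        + stepFn (k - n) * stepFn (i - m) + stepFn (k - n) * stepFn (j - m)
        + stepFn (k - m) * stepFn (i - n) + stepFn (k - m) * stepFn (j - n)
        + stepFn (i - n) * stepFn (j - m) + stepFn (i - m) * stepFn (j - n) := by
  simp only [Qconst, fConst, stepFn]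
  split_ifs <;> omega
end

section
/- Let P(λ) = λ^r + w^{r-1}λ^{r-1} + ⋯ + w^0 have pairwise distinct roots λ_1, …, λ_r, and fix an integer m with 0 ≤ m ≤ r. Define the symmetric r×r matrix g_m with entries g_m^{ij} = (2 / (P'(λ_i)P'(λ_j))) · Σ_{k,l=0}^{r-1} 2 f^{kl}_m w^{k+l+1-m} λ_i^k λ_j^l, where f^{kl}_m = +1 if k,l < m, -1 if k,l ≥ m, 0 otherwise, with conventions w^r = 1 and w^h = 0 for h < 0 or h > r. Then g_m is diagonal: g_m^{ij} = 0 for i ≠ j, and g_m^{ii} = -2 λ_i^m / P'(λ_i). -/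
/-!
Write `S(x, y) = Σ_{k,l<r} f^{kl}_m w^{k+l+1-m} x^k y^l` (`metricNumerator`), so that
`g_m^{ij} = 2 S(λ_i, λ_j) / (P'(λ_i) P'(λ_j))`.
Summing each column `l` over `k`, the `w` with negative index drop out and one finds
`S(x, y) = -x^m Q(x, y)` whenever `P(x) = 0`, where
`Q(x, y) = Σ_h w^{h+1} (y^{h+1} - x^{h+1}) / (y - x)` (`divDiff`) is the divided difference of `P`.
Hence `S(λ_i, λ_j) = 0` for distinct roots, while `Q(x, x) = P'(x)` gives the diagonal entries.
-/

open Finset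

namespace RootMetric

variable {R : Type*} [CommRing R] (W : ℤ → R) (r m : ℕ)

def polyEval (x : R) : R := ∑ h ∈ range (r + 1), W h * x ^ h

def polyDerivEval (x : R) : R := ∑ h ∈ range (r + 1), (h : R) * W h * x ^ (h - 1)

def divDiff (x y : R) : R := ∑ h ∈ range r, W (h + 1) * ∑ i ∈ range (h + 1), y ^ i * x ^ (h - i)

def signPattern (k l : ℕ) : R := if k < m ∧ l < m then 1 else if m ≤ k ∧ m ≤ l then -1 else 0

def metricNumerator (x y : R) : R :=
  ∑ k ∈ range r, ∑ l ∈ range r, signPattern m k l * W ((k : ℤ) + l + 1 - m) * x ^ k * y ^ l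

theorem divDiff_mul_sub (x y : R) :
    divDiff W r x y * (y - x) = polyEval W r y - polyEval W r x := by
  have hgeom : ∀ h ∈ range r, W (h + 1) * (∑ i ∈ range (h + 1), y ^ i * x ^ (h - i)) * (y - x)
      = W ((h + 1 : ℕ) : ℤ) * y ^ (h + 1) - W ((h + 1 : ℕ) : ℤ) * x ^ (h + 1) := by
    intro h _
    have hsum := geom_sum₂_mul y x (h + 1)
    rw [Nat.add_sub_cancel] at hsum
    rw [mul_assoc, hsum]
    push_cast
    ring
  rw [divDiff, sum_mul, sum_congr rfl hgeom, sum_sub_distrib, polyEval, polyEval,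
    sum_range_succ', sum_range_succ' _ r]
  ring

theorem divDiff_self (x : R) : divDiff W r x x = polyDerivEval W r x := by
  have hterm : ∀ h ∈ range r, W (h + 1) * ∑ i ∈ range (h + 1), x ^ i * x ^ (h - i)
      = ((h + 1 : ℕ) : R) * W ((h + 1 : ℕ) : ℤ) * x ^ (h + 1 - 1) := by
    intro h _
    have hpow : ∀ i ∈ range (h + 1), x ^ i * x ^ (h - i) = x ^ h := fun i hi => by
      rw [← pow_add, Nat.add_sub_cancel' (Nat.lt_succ_iff.mp (mem_range.mp hi))]
    rw [sum_congr rfl hpow, sum_const, card_range, nsmul_eq_mul, Nat.add_sub_cancel]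
    push_cast
    ring
  rw [divDiff, sum_congr rfl hterm, polyDerivEval, sum_range_succ' _ r]
  simp

theorem divDiff_eq_zero_of_roots [IsDomain R] {x y : R} (hx : polyEval W r x = 0)
    (hy : polyEval W r y = 0) (hxy : x ≠ y) : divDiff W r x y = 0 := by
  have h := divDiff_mul_sub W r x y
  rw [hx, hy, sub_zero] at h
  exact (mul_eq_zero.mp h).resolve_right (sub_ne_zero.mpr hxy.symm)

theorem sum_range_shift (hneg : ∀ h : ℤ, h < 0 → W h = 0) {c n : ℕ} (hc : c ≤ n) (x : R) :
    ∑ k ∈ range n, W ((k : ℤ) - c) * x ^ k = x ^ c * ∑ h ∈ range (n - c), W h * x ^ h := by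
  rw [← sum_range_add_sum_Ico _ hc, sum_eq_zero, zero_add, sum_Ico_eq_sum_range, mul_sum]
  · refine sum_congr rfl fun k _ => ?_
    rw [pow_add]
    push_cast
    ring_nf
  · intro k hk
    rw [hneg _ (by simp at hk; omega), zero_mul]

theorem polyEval_eq_add (x : R) {l : ℕ} (hl : l ≤ r) :
    polyEval W r x = ∑ h ∈ range (l + 1), W h * x ^ h
      + ∑ j ∈ range (r - l), W ((j : ℤ) + l + 1) * x ^ (l + 1 + j) := by
  rw [polyEval, show r + 1 = l + 1 + (r - l) by omega, sum_range_add]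
  congr 1
  refine sum_congr rfl fun j _ => ?_
  push_cast
  ring_nf

theorem sum_signPattern_column (hm : m ≤ r) (hW0 : ∀ h : ℤ, h < 0 ∨ (r : ℤ) < h → W h = 0)
    (l : ℕ) (x : R) :
    ∑ k ∈ range r, signPattern m k l * W ((k : ℤ) + l + 1 - m) * x ^ k
      = (if l < m then x ^ (m - 1 - l) * polyEval W r x else 0)
        - x ^ m * ∑ j ∈ range (r - l), W ((j : ℤ) + l + 1) * x ^ j := by
  rw [← sum_range_add_sum_Ico _ hm, sum_Ico_eq_sum_range, mul_sum]
  by_cases hl : l < m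
  · have hhead : ∑ k ∈ range m, signPattern m k l * W ((k : ℤ) + l + 1 - m) * x ^ k
        = x ^ (m - 1 - l) * ∑ h ∈ range (l + 1), W h * x ^ h := by
      rw [← show m - (m - 1 - l) = l + 1 by omega,
        ← sum_range_shift W (fun h hh => hW0 h (Or.inl hh)) (by omega : m - 1 - l ≤ m)]
      refine sum_congr rfl fun k hk => ?_
      rw [signPattern, if_pos ⟨mem_range.mp hk, hl⟩, one_mul]
      congr 2
      omega
    have htail : ∀ k ∈ range (r - m), signPattern m (m + k) l
        * W (((m + k : ℕ) : ℤ) + l + 1 - m) * x ^ (m + k) = 0 := fun k _ => by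
      rw [signPattern, if_neg (by omega), if_neg (by omega), zero_mul, zero_mul]
    rw [hhead, sum_eq_zero htail, if_pos hl, polyEval_eq_add W r x (by omega : l ≤ r), mul_add,
      mul_sum, mul_sum]
    have hpow : ∀ j ∈ range (r - l), x ^ (m - 1 - l) * (W ((j : ℤ) + l + 1) * x ^ (l + 1 + j))
        = x ^ m * (W ((j : ℤ) + l + 1) * x ^ j) := fun j _ => by
      rw [show x ^ m = x ^ (m - 1 - l) * x ^ (l + 1) by rw [← pow_add]; congr 1; omega, pow_add]
      ring
    rw [sum_congr rfl hpow]
    ring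
  · have hhead : ∀ k ∈ range m, signPattern m k l * W ((k : ℤ) + l + 1 - m) * x ^ k = 0 :=
      fun k hk => by
        rw [signPattern, if_neg (by omega), if_neg (by simp at hk; omega), zero_mul, zero_mul]
    have htail : ∀ k ∈ range (r - m), signPattern m (m + k) l
        * W (((m + k : ℕ) : ℤ) + l + 1 - m) * x ^ (m + k)
        = -(x ^ m * (W ((k : ℤ) + l + 1) * x ^ k)) := fun k _ => by
      rw [signPattern, if_neg (by omega), if_pos (by omega), pow_add]
      push_cast
      ring_nf
    have hvanish : ∀ j ∈ Ico (r - l) (r - m), x ^ m * (W ((j : ℤ) + l + 1) * x ^ j) = 0 :=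
      fun j hj => by
        rw [hW0 _ (Or.inr (by simp at hj; omega)), zero_mul, mul_zero]
    rw [sum_eq_zero hhead, sum_congr rfl htail, if_neg hl, sum_neg_distrib,
      ← sum_range_add_sum_Ico _ (by omega : r - l ≤ r - m), sum_eq_zero hvanish]
    ring

theorem divDiff_eq_sum_sum (x y : R) :
    divDiff W r x y = ∑ l ∈ range r, ∑ j ∈ range (r - l), W ((j : ℤ) + l + 1) * x ^ j * y ^ l := by
  rw [← sum_range_diag_flip, divDiff]
  refine sum_congr rfl fun h _ => ?_
  rw [mul_sum]
  refine sum_congr rfl fun i hi => ?_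
  rw [show ((h - i : ℕ) : ℤ) + i + 1 = h + 1 by have := mem_range.mp hi; omega]
  ring

theorem metricNumerator_eq_of_root (hm : m ≤ r)
    (hW0 : ∀ h : ℤ, h < 0 ∨ (r : ℤ) < h → W h = 0) {x : R} (hx : polyEval W r x = 0) (y : R) :
    metricNumerator W r m x y = -(x ^ m * divDiff W r x y) := by
  have hcolumn : ∀ l ∈ range r,
      ∑ k ∈ range r, signPattern m k l * W ((k : ℤ) + l + 1 - m) * x ^ k * y ^ l
        = -(x ^ m * ∑ j ∈ range (r - l), W ((j : ℤ) + l + 1) * x ^ j * y ^ l) := fun l _ => by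
    rw [← sum_mul, sum_signPattern_column W r m hm hW0, hx, mul_zero, ite_self, zero_sub,
      neg_mul, mul_assoc, sum_mul]
  rw [metricNumerator, sum_comm, sum_congr rfl hcolumn, sum_neg_distrib, ← mul_sum,
    divDiff_eq_sum_sum]

end RootMetric

open RootMetric

open Finset in
theorem stmt_6_general (r m : ℕ) (hm : m ≤ r) (W : ℤ → ℝ)
    (hW0 : ∀ h : ℤ, h < 0 ∨ (r : ℤ) < h → W h = 0)
    (lam : Fin r → ℝ) (hinj : Function.Injective lam)
    (hroot : ∀ i, ∑ h ∈ Finset.range (r + 1), W (h : ℤ) * lam i ^ h = 0)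
    (dP : ℝ → ℝ)
    (hdP : dP = fun x => ∑ h ∈ Finset.range (r + 1), (h : ℝ) * W (h : ℤ) * x ^ (h - 1))
    (F : ℕ → ℕ → ℝ)
    (hF : F = fun k l =>
      if k < m ∧ l < m then 1 else if m ≤ k ∧ m ≤ l then -1 else 0)
    (g : Fin r → Fin r → ℝ)
    (hg : g = fun i j => 2 / (dP (lam i) * dP (lam j)) *
      ∑ k ∈ Finset.range r, ∑ l ∈ Finset.range r,
        F k l * W ((k : ℤ) + l + 1 - m) * lam i ^ k * lam j ^ l) :
    (∀ i j, i ≠ j → g i j = 0) ∧ (∀ i, g i i = -2 * lam i ^ m / dP (lam i)) := by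
  have hentry : ∀ i j, g i j = 2 / (dP (lam i) * dP (lam j)) * metricNumerator W r m (lam i) (lam j) :=
    fun i j => by subst hg hF; rfl
  have hderiv : ∀ x, dP x = polyDerivEval W r x := fun x => by subst hdP; rfl
  refine ⟨fun i j hij => ?_, fun i => ?_⟩
  · rw [hentry, metricNumerator_eq_of_root W r m hm hW0 (hroot i),
      divDiff_eq_zero_of_roots W r (hroot i) (hroot j) (hinj.ne hij), mul_zero, neg_zero, mul_zero]
  · rw [hentry, metricNumerator_eq_of_root W r m hm hW0 (hroot i), divDiff_self, ← hderiv]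
    rcases eq_or_ne (dP (lam i)) 0 with h0 | h0
    · simp [h0]
    · field_simp

open Finset in
/-- In the root coordinates `λ_1,…,λ_r` of `P(λ) = λ^r + w^{r-1}λ^{r-1} + ⋯ + w^0`
(pairwise distinct roots), the metric `g_m` with entries
`g_m^{ij} = (2/(P'(λ_i)P'(λ_j))) Σ_{k,l=0}^{r-1} f^{kl}_m w^{k+l+1-m} λ_i^k λ_j^l`
(conventions `w^r = 1`, `w^h = 0` for `h < 0` or `h > r`) is diagonal, with
`g_m^{ii} = -2 λ_i^m / P'(λ_i)`. -/
theorem stmt_6 (r m : ℕ) (hm : m ≤ r) (W : ℤ → ℝ) (hWr : W (r : ℤ) = 1)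
    (hW0 : ∀ h : ℤ, h < 0 ∨ (r : ℤ) < h → W h = 0)
    (lam : Fin r → ℝ) (hinj : Function.Injective lam) (hne : ∀ i, lam i ≠ 0)
    (hroot : ∀ i, ∑ h ∈ Finset.range (r + 1), W (h : ℤ) * lam i ^ h = 0)
    (dP : ℝ → ℝ)
    (hdP : dP = fun x => ∑ h ∈ Finset.range (r + 1), (h : ℝ) * W (h : ℤ) * x ^ (h - 1))
    (hdPne : ∀ i, dP (lam i) ≠ 0)
    (F : ℕ → ℕ → ℝ)
    (hF : F = fun k l =>
      if k < m ∧ l < m then 1 else if m ≤ k ∧ m ≤ l then -1 else 0)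
    (g : Fin r → Fin r → ℝ)
    (hg : g = fun i j => 2 / (dP (lam i) * dP (lam j)) *
      ∑ k ∈ Finset.range r, ∑ l ∈ Finset.range r,
        F k l * W ((k : ℤ) + l + 1 - m) * lam i ^ k * lam j ^ l) :
    (∀ i j, i ≠ j → g i j = 0) ∧ (∀ i, g i i = -2 * lam i ^ m / dP (lam i)) :=
  stmt_6_general r m hm W hW0 lam hinj hroot dP hdP F hF g hg
end

section
/- Fix integers 0 ≤ m ≤ r and real constants a_0, …, a_r, and set p(λ) = a_0 + a_1λ + ⋯ + a_rλ^r. Let f^{kl}_m = +1 if k,l < m, -1 if k,l ≥ m, 0 otherwise. Then for any λ, Σ_{k,l=0}^{r-1} f^{kl}_m a_{k+l+1-m} λ^{k+l} = m λ^{m-1} p(λ) - λ^m p'(λ), where a_h = 0 for h < 0 or h > r. -/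
/-!
Split the sign pattern into the block `k, l < m` (sign `+1`) and the block `m ≤ k, l < r`
(sign `-1`). For fixed `k`, substituting `j = k + l + 1 - m` turns the inner sum into a sum of
`a_j λ^(m+j-1)` over `j ≤ k` in the first block and over `k < j ≤ r` in the second; exchanging the
order of summation, `a_j λ^(m+j-1)` appears `m - j` times (`j < m`) with sign `+` and `j - m` times
(`j > m`) with sign `-`. This is `Σ_j (m - j) a_j λ^(m+j-1)`, which is also the right-hand side
expanded monomial by monomial.
-/

open Finset

theorem sum_signed_blocks_mul {R : Type*} [Ring R] {m r : ℕ} (hm : m ≤ r) (T : ℕ → ℕ → R) :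
    ∑ k ∈ range r, ∑ l ∈ range r,
        (if k < m ∧ l < m then (1 : R) else if m ≤ k ∧ m ≤ l then -1 else 0) * T k l =
      ∑ k ∈ range m, ∑ l ∈ range m, T k l - ∑ k ∈ Ico m r, ∑ l ∈ Ico m r, T k l := by
  set c : ℕ → ℕ → R := fun k l => if k < m ∧ l < m then 1 else if m ≤ k ∧ m ≤ l then -1 else 0
  have split (F : ℕ → R) : ∑ k ∈ range r, F k = ∑ k ∈ range m, F k + ∑ k ∈ Ico m r, F k :=
    (sum_range_add_sum_Ico F hm).symm
  have block {s t : Finset ℕ} (v : R) (hv : ∀ k ∈ s, ∀ l ∈ t, c k l = v) :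
      ∑ k ∈ s, ∑ l ∈ t, c k l * T k l = v * ∑ k ∈ s, ∑ l ∈ t, T k l := by
    simp only [mul_sum]
    exact sum_congr rfl fun k hk => sum_congr rfl fun l hl => by rw [hv k hk l hl]
  simp only [split, sum_add_distrib]
  rw [block 1, block 0, block 0, block (-1)]
  · simp only [one_mul, zero_mul, add_zero, zero_add, neg_one_mul, sub_eq_add_neg]
  all_goals
    intro k hk l hl
    simp only [mem_range, mem_Ico] at hk hl
    simp only [c]
    split_ifs <;> first | rfl | omega

theorem sum_range_sum_range_succ {M : Type*} [AddCommMonoid M] (g : ℕ → M) (m : ℕ) :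
    ∑ k ∈ range m, ∑ j ∈ range (k + 1), g j = ∑ j ∈ range m, (m - j) • g j := by
  rw [sum_comm' (t' := range m) (s' := fun j => Ico j m) (by intro k j; simp; omega)]
  simp

theorem sum_Ico_sum_Ico_succ {M : Type*} [AddCommMonoid M] (g : ℕ → M) (m r : ℕ) :
    ∑ k ∈ Ico m r, ∑ j ∈ Ico (k + 1) (r + 1), g j =
      ∑ j ∈ Ico (m + 1) (r + 1), (j - m) • g j := by
  rw [sum_comm' (t' := Ico (m + 1) (r + 1)) (s' := fun j => Ico m j) (by intro k j; simp; omega)]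
  simp

theorem natCast_mul_pow_sub_one_mul_pow_sub {R : Type*} [CommRing R] (m h : ℕ) (x : R) :
    m * x ^ (m - 1) * x ^ h - x ^ m * (h * x ^ (h - 1)) = (m - h) * x ^ (m + h - 1) := by
  cases m with
  | zero => simp
  | succ m =>
    cases h with
    | zero => simp
    | succ h =>
      rw [show m + 1 + (h + 1) - 1 = m + 1 + h by omega]
      push_cast
      ring

theorem natCast_mul_pow_sub_one_mul_sum_sub {R : Type*} [CommRing R] (m : ℕ) (x : R)
    (s : Finset ℕ) (a : ℕ → R) :
    m * x ^ (m - 1) * ∑ h ∈ s, a h * x ^ h - x ^ m * ∑ h ∈ s, (h : R) * a h * x ^ (h - 1) =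
      ∑ h ∈ s, (m - h) * (a h * x ^ (m + h - 1)) := by
  rw [mul_sum, mul_sum, ← sum_sub_distrib]
  refine sum_congr rfl fun h _ => ?_
  linear_combination a h * natCast_mul_pow_sub_one_mul_pow_sub m h x

section ShiftedCoeff

variable {r m : ℕ} {a : ℕ → ℝ} {A : ℤ → ℝ}
  (hA : ∀ h : ℤ, A h = if 0 ≤ h ∧ h ≤ (r : ℤ) then a h.toNat else 0) (x : ℝ)
include hA

theorem shifted_mul_pow (k l : ℕ) :
    A ((k : ℤ) + l + 1 - m) * x ^ (k + l) =
      if m ≤ k + l + 1 ∧ k + l + 1 ≤ m + r then a (k + l + 1 - m) * x ^ (k + l) else 0 := by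
  rw [hA]
  split_ifs <;> first | (congr 2; omega) | omega | simp

theorem sum_range_shifted_mul_pow {k : ℕ} (hk : k < m) (hm : m ≤ r) :
    ∑ l ∈ range m, A ((k : ℤ) + l + 1 - m) * x ^ (k + l) =
      ∑ j ∈ range (k + 1), a j * x ^ (m + j - 1) := by
  simp only [shifted_mul_pow hA, ← sum_filter]
  refine sum_nbij' (fun l => k + l + 1 - m) (fun j => j + m - 1 - k) ?_ ?_ ?_ ?_ ?_ <;>
    intro l hl <;> simp only [mem_filter, mem_range] at hl ⊢
  all_goals first | omega | (congr 2; omega)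

theorem sum_Ico_shifted_mul_pow {k : ℕ} (hk : m ≤ k) :
    ∑ l ∈ Ico m r, A ((k : ℤ) + l + 1 - m) * x ^ (k + l) =
      ∑ j ∈ Ico (k + 1) (r + 1), a j * x ^ (m + j - 1) := by
  simp only [shifted_mul_pow hA, ← sum_filter]
  refine sum_nbij' (fun l => k + l + 1 - m) (fun j => j + m - 1 - k) ?_ ?_ ?_ ?_ ?_ <;>
    intro l hl <;> simp only [mem_filter, mem_Ico] at hl ⊢
  all_goals first | omega | (congr 2; omega)

end ShiftedCoeff

open Finset in
/-- With `p(λ) = a_0 + a_1 λ + ⋯ + a_r λ^r`, the convention `a_h = 0` for `h` outside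
`{0,…,r}`, and `f^{kl}_m = +1` if `k,l < m`, `-1` if `k,l ≥ m`, `0` otherwise
(`0 ≤ m ≤ r`), one has
`Σ_{k,l=0}^{r-1} f^{kl}_m a_{k+l+1-m} λ^{k+l} = m λ^{m-1} p(λ) - λ^m p'(λ)`. -/
theorem stmt_10 (r m : ℕ) (hm : m ≤ r) (a : ℕ → ℝ) (A : ℤ → ℝ)
    (hA : ∀ h : ℤ, A h = if 0 ≤ h ∧ h ≤ (r : ℤ) then a h.toNat else 0)
    (x : ℝ) :
    ∑ k ∈ Finset.range r, ∑ l ∈ Finset.range r,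
        (if k < m ∧ l < m then (1 : ℝ) else if m ≤ k ∧ m ≤ l then -1 else 0) *
          A ((k : ℤ) + l + 1 - m) * x ^ (k + l) =
      (m : ℝ) * x ^ (m - 1) * (∑ h ∈ Finset.range (r + 1), a h * x ^ h) -
        x ^ m * (∑ h ∈ Finset.range (r + 1), (h : ℝ) * a h * x ^ (h - 1)) := by
  rw [natCast_mul_pow_sub_one_mul_sum_sub]
  simp only [mul_assoc]
  rw [sum_signed_blocks_mul hm,
    sum_congr rfl fun k hk => sum_range_shifted_mul_pow hA x (mem_range.1 hk) hm,
    sum_congr rfl fun k hk => sum_Ico_shifted_mul_pow hA x (mem_Ico.1 hk).1,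
    sum_range_sum_range_succ, sum_Ico_sum_Ico_succ,
    ← sum_range_add_sum_Ico _ (by omega : m + 1 ≤ r + 1), sum_range_succ,
    sub_self, zero_mul, add_zero, sub_eq_add_neg, ← sum_neg_distrib]
  congr 1 <;> refine sum_congr rfl fun j hj => ?_
  · rw [nsmul_eq_mul, Nat.cast_sub (mem_range.1 hj).le]
  · rw [nsmul_eq_mul, Nat.cast_sub (by simp only [mem_Ico] at hj; omega)]
    ring
end

section
/- With the same setting (P monic of degree r, conventions w^r = 1, w^h = 0 outside range, f^{kl}_m as above), the diagonal specialization satisfies Σ_{k,l=0}^{r-1} f^{kl}_m w^{k+l+1-m} λ^{k+l} = m λ^{m-1} P(λ) - λ^m P'(λ), as an identity of polynomials in λ. In particular, evaluating at a root λ_i of P gives Σ_{k,l} f^{kl}_m w^{k+l+1-m} λ_i^{k+l} = -λ_i^m P'(λ_i). -/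
/-!
Both sides are linear in `w`, so it suffices to compare the coefficients of `w^n λ^{n+m-1}`,
`0 ≤ n ≤ r`. On the right it is `m - n`, the Wronskian of `λ^m` and `λ^n`. On the left it is the
signed number of points `(k, l) ∈ [0, r)²` on the antidiagonal `k + l + 1 = n + m`: writing
`f^{kl}_m = [k < m] + [l < m] - 1` and using the symmetry `k ↔ l`, it is `2 A_m - A_r`, where
`A_N` counts the antidiagonal points with `k < N`, and `A_N = min N (n + m) - (n + m - r)`.
-/

open Finset

/-- The sign `f^{kl}_m`. -/
def signPattern (m k l : ℕ) : ℝ :=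
  if k < m ∧ l < m then 1 else if m ≤ k ∧ m ≤ l then -1 else 0

lemma signPattern_eq (m k l : ℕ) :
    signPattern m k l = (if k < m then 1 else 0) + (if l < m then 1 else 0) - 1 := by
  unfold signPattern
  split_ifs <;> first | omega | norm_num

lemma sum_range_ite_lt {M : Type*} [AddCommMonoid M] {m N : ℕ} (h : m ≤ N) (g : ℕ → M) :
    ∑ k ∈ range N, (if k < m then g k else 0) = ∑ k ∈ range m, g k := by
  rw [← sum_filter]
  congr 1
  ext k
  simp only [mem_filter, mem_range]
  omega

lemma sum_range_ite_add_add_one_eq (r k s : ℕ) (a : ℝ) :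
    (∑ l ∈ range r, if k + l + 1 = s then a else 0) = if k < s ∧ s ≤ k + r then a else 0 := by
  split_ifs with h
  · rw [sum_eq_single_of_mem (s - 1 - k) (mem_range.2 (by omega))
      fun l _ hl => if_neg (by omega), if_pos (by omega)]
  · exact sum_eq_zero fun l hl => if_neg (by rw [mem_range] at hl; omega)

lemma card_filter_range_lt_and_le_add (N r s : ℕ) :
    #{k ∈ range N | k < s ∧ s ≤ k + r} = min N s - (s - r) := by
  have : {k ∈ range N | k < s ∧ s ≤ k + r} = Ico (s - r) (min N s) := by
    ext k
    simp only [mem_filter, mem_range, mem_Ico]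
    omega
  rw [this, Nat.card_Ico]

lemma sum_range_sum_range_ite_add_add_one (N r s : ℕ) :
    ∑ k ∈ range N, ∑ l ∈ range r, (if k + l + 1 = s then (1 : ℝ) else 0)
      = ((min N s - (s - r) : ℕ) : ℝ) := by
  simp only [sum_range_ite_add_add_one_eq]
  rw [sum_boole, card_filter_range_lt_and_le_add]

lemma sum_antidiagonal_signPattern {r m n : ℕ} (hm : m ≤ r) (hn : n ≤ r) :
    ∑ k ∈ range r, ∑ l ∈ range r, (if k + l + 1 = n + m then signPattern m k l else 0)
      = (m : ℝ) - n := by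
  have hsplit : ∀ k l, (if k + l + 1 = n + m then signPattern m k l else 0)
      = (if k < m then (if k + l + 1 = n + m then 1 else 0) else 0)
        + (if l < m then (if k + l + 1 = n + m then 1 else 0) else 0)
        - (if k + l + 1 = n + m then 1 else 0) := by
    intro k l
    rw [signPattern_eq]
    split_ifs <;> ring
  have hsymm : ∑ k ∈ range r, ∑ l ∈ range r,
        (if l < m then (if k + l + 1 = n + m then (1 : ℝ) else 0) else 0)
      = ∑ k ∈ range r, ∑ l ∈ range r,
        (if k < m then (if k + l + 1 = n + m then 1 else 0) else 0) := by
    rw [sum_comm]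
    simp only [add_right_comm _ _ 1, add_comm]
  have hcount : 2 * (min m (n + m) - (n + m - r)) + n = (min r (n + m) - (n + m - r)) + m := by
    omega
  simp only [hsplit, sum_add_distrib, sum_sub_distrib]
  rw [hsymm]
  simp only [← ite_sum_zero, sum_range_ite_lt hm, sum_range_sum_range_ite_add_add_one]
  have := congrArg (Nat.cast (R := ℝ)) hcount
  push_cast [Nat.cast_add, Nat.cast_mul] at this
  linarith

lemma eq_sum_range_ite_of_support {r : ℕ} {W : ℤ → ℝ}
    (hW0 : ∀ h : ℤ, h < 0 ∨ (r : ℤ) < h → W h = 0) (j : ℤ) :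
    W j = ∑ n ∈ range (r + 1), if (n : ℤ) = j then W n else 0 := by
  by_cases hj : 0 ≤ j ∧ j ≤ r
  · lift j to ℕ using hj.1
    simp only [Nat.cast_inj, sum_ite_eq', mem_range]
    rw [if_pos (by omega)]
  · rw [hW0 j (by omega)]
    exact (sum_eq_zero fun n hn => if_neg (by rw [mem_range] at hn; omega)).symm

lemma sum_signPattern_mul_eq_sum_coeff {r m : ℕ} {W : ℤ → ℝ}
    (hW0 : ∀ h : ℤ, h < 0 ∨ (r : ℤ) < h → W h = 0) (x : ℝ) :
    ∑ k ∈ range r, ∑ l ∈ range r, signPattern m k l * W ((k : ℤ) + l + 1 - m) * x ^ (k + l)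
      = ∑ n ∈ range (r + 1), W n *
          (∑ k ∈ range r, ∑ l ∈ range r, if k + l + 1 = n + m then signPattern m k l else 0) *
            x ^ (n + m - 1) := by
  have hterm : ∀ k l : ℕ, signPattern m k l * W ((k : ℤ) + l + 1 - m) * x ^ (k + l)
      = ∑ n ∈ range (r + 1),
          W n * (if k + l + 1 = n + m then signPattern m k l else 0) * x ^ (n + m - 1) := by
    intro k l
    rw [eq_sum_range_ite_of_support hW0, mul_sum, sum_mul]
    refine sum_congr rfl fun n _ => ?_
    by_cases h : k + l + 1 = n + m
    · rw [if_pos (by omega), if_pos h, show n + m - 1 = k + l by omega]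
      ring
    · rw [if_neg (by omega), if_neg h]
      ring
  simp only [hterm]
  rw [sum_congr rfl fun k _ => sum_comm, sum_comm]
  simp only [mul_sum, sum_mul]

lemma natCast_mul_pow_mul_pow_sub_pow_mul_natCast_mul_pow (m n : ℕ) (x : ℝ) :
    m * x ^ (m - 1) * x ^ n - x ^ m * (n * x ^ (n - 1)) = ((m : ℝ) - n) * x ^ (n + m - 1) := by
  rcases m with _ | m <;> rcases n with _ | n
  · simp
  · simp only [show n + 1 + 0 - 1 = n by omega]
    push_cast
    ring
  · simp [show m + 1 - 1 = m by omega]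
  · rw [show n + 1 + (m + 1) - 1 = m + (n + 1) by omega, show m + 1 - 1 = m by omega,
      show n + 1 - 1 = n by omega]
    push_cast
    ring

lemma sum_signPattern_mul_eq {r m : ℕ} (hm : m ≤ r) {W : ℤ → ℝ}
    (hW0 : ∀ h : ℤ, h < 0 ∨ (r : ℤ) < h → W h = 0) (x : ℝ) :
    ∑ k ∈ range r, ∑ l ∈ range r, signPattern m k l * W ((k : ℤ) + l + 1 - m) * x ^ (k + l)
      = (m : ℝ) * x ^ (m - 1) * (∑ h ∈ range (r + 1), W (h : ℤ) * x ^ h) -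
          x ^ m * (∑ h ∈ range (r + 1), (h : ℝ) * W (h : ℤ) * x ^ (h - 1)) := by
  rw [sum_signPattern_mul_eq_sum_coeff hW0, mul_sum, mul_sum, ← sum_sub_distrib]
  refine sum_congr rfl fun n hn => ?_
  rw [sum_antidiagonal_signPattern hm (by rw [mem_range] at hn; omega)]
  linear_combination -W n * natCast_mul_pow_mul_pow_sub_pow_mul_natCast_mul_pow m n x

open Finset in
theorem stmt_12_general (r m : ℕ) (hm : m ≤ r) (W : ℤ → ℝ)
    (hW0 : ∀ h : ℤ, h < 0 ∨ (r : ℤ) < h → W h = 0) :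
    (∀ x : ℝ,
      ∑ k ∈ Finset.range r, ∑ l ∈ Finset.range r,
          (if k < m ∧ l < m then (1 : ℝ) else if m ≤ k ∧ m ≤ l then -1 else 0) *
            W ((k : ℤ) + l + 1 - m) * x ^ (k + l) =
        (m : ℝ) * x ^ (m - 1) * (∑ h ∈ Finset.range (r + 1), W (h : ℤ) * x ^ h) -
          x ^ m * (∑ h ∈ Finset.range (r + 1), (h : ℝ) * W (h : ℤ) * x ^ (h - 1))) ∧
    (∀ x : ℝ, (∑ h ∈ Finset.range (r + 1), W (h : ℤ) * x ^ h) = 0 →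
      ∑ k ∈ Finset.range r, ∑ l ∈ Finset.range r,
          (if k < m ∧ l < m then (1 : ℝ) else if m ≤ k ∧ m ≤ l then -1 else 0) *
            W ((k : ℤ) + l + 1 - m) * x ^ (k + l) =
        -(x ^ m) * (∑ h ∈ Finset.range (r + 1), (h : ℝ) * W (h : ℤ) * x ^ (h - 1))) := by
  refine ⟨sum_signPattern_mul_eq hm hW0, fun x hx => ?_⟩
  exact (sum_signPattern_mul_eq hm hW0 x).trans (by rw [hx, mul_zero, zero_sub, neg_mul])

open Finset in
/-- Diagonal specialization: with `P(λ) = λ^r + Σ_{h<r} w^h λ^h` (conventions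
`w^r = 1`, `w^h = 0` outside `{0,…,r}`) and `f^{kl}_m` as usual,
`Σ_{k,l=0}^{r-1} f^{kl}_m w^{k+l+1-m} λ^{k+l} = m λ^{m-1} P(λ) - λ^m P'(λ)` as an
identity in `λ`; in particular at a root `λ_i` of `P` the sum equals
`-λ_i^m P'(λ_i)`. -/
theorem stmt_12 (r m : ℕ) (hm : m ≤ r) (W : ℤ → ℝ) (hWr : W (r : ℤ) = 1)
    (hW0 : ∀ h : ℤ, h < 0 ∨ (r : ℤ) < h → W h = 0) :
    (∀ x : ℝ,
      ∑ k ∈ Finset.range r, ∑ l ∈ Finset.range r,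
          (if k < m ∧ l < m then (1 : ℝ) else if m ≤ k ∧ m ≤ l then -1 else 0) *
            W ((k : ℤ) + l + 1 - m) * x ^ (k + l) =
        (m : ℝ) * x ^ (m - 1) * (∑ h ∈ Finset.range (r + 1), W (h : ℤ) * x ^ h) -
          x ^ m * (∑ h ∈ Finset.range (r + 1), (h : ℝ) * W (h : ℤ) * x ^ (h - 1))) ∧
    (∀ x : ℝ, (∑ h ∈ Finset.range (r + 1), W (h : ℤ) * x ^ h) = 0 →
      ∑ k ∈ Finset.range r, ∑ l ∈ Finset.range r,
          (if k < m ∧ l < m then (1 : ℝ) else if m ≤ k ∧ m ≤ l then -1 else 0) *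
            W ((k : ℤ) + l + 1 - m) * x ^ (k + l) =
        -(x ^ m) * (∑ h ∈ Finset.range (r + 1), (h : ℝ) * W (h : ℤ) * x ^ (h - 1))) :=
  stmt_12_general r m hm W hW0
end

section
/- For |x| < 1 and |y| < 1 and nonnegative integers n, m, the generating function identity Σ_{i,j≥0} s_{i+j+1-n-m}(s_{i-n} + s_{i-m} + s_{j-n} + s_{j-m} - 2) x^i y^j = (x^m y^n + x^n y^m)/((1-x)(1-y)) holds, where s_k = 1 for k ≥ 0 and s_k = 0 for k < 0. -/
/-- The step function with real values: `s k = 1` for `k ≥ 0`, `s k = 0` for `k < 0`. -/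
def stepFnR (k : ℤ) : ℝ := if 0 ≤ k then 1 else 0

/-!
For `i + j + 1 ≥ n + m`, the bracket `s_{i-n} + s_{i-m} + s_{j-n} + s_{j-m} - 2` equals
`[m ≤ i ∧ n ≤ j] + [n ≤ i ∧ m ≤ j]`, and both of these quadrants lie in the half-plane
`i + j + 1 ≥ n + m`. So the series is the sum of two products of tails of geometric series,
`(Σ_{i ≥ m} x^i)(Σ_{j ≥ n} y^j) + (Σ_{i ≥ n} x^i)(Σ_{j ≥ m} y^j)`.
-/

theorem HasSum.mul_of_summable_norm {ι ι' R : Type*} [NormedRing R] {f : ι → R} {g : ι' → R}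
    {s t : R} (hf : HasSum f s) (hg : HasSum g t) (hf' : Summable fun i => ‖f i‖)
    (hg' : Summable fun j => ‖g j‖) : HasSum (fun p : ι × ι' => f p.1 * g p.2) (s * t) :=
  hf.mul hg (summable_mul_of_summable_norm' hf' hf.summable hg' hg.summable)

section TailGeometric

variable {K : Type*} [NormedDivisionRing K] {x y : K}

theorem hasSum_ite_le_pow (hx : ‖x‖ < 1) (m : ℕ) :
    HasSum (fun i : ℕ => if m ≤ i then x ^ i else 0) (x ^ m / (1 - x)) := by
  rw [← hasSum_nat_add_iff' m, Finset.sum_eq_zero fun i hi => if_neg (by simpa using hi), sub_zero]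
  simpa [← pow_add, add_comm m, div_eq_mul_inv] using
    ((hasSum_geometric_of_norm_lt_one hx).mul_left (x ^ m))

theorem summable_norm_ite_le_pow (hx : ‖x‖ < 1) (m : ℕ) :
    Summable (fun i : ℕ => ‖if m ≤ i then x ^ i else 0‖) := by
  simpa [apply_ite, norm_pow] using
    (hasSum_ite_le_pow (x := ‖x‖) (by simpa using hx) m).summable

theorem hasSum_ite_le_pow_mul_ite_le_pow (hx : ‖x‖ < 1) (hy : ‖y‖ < 1) (a b : ℕ) :
    HasSum (fun p : ℕ × ℕ => (if a ≤ p.1 then x ^ p.1 else 0) * (if b ≤ p.2 then y ^ p.2 else 0))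
      (x ^ a / (1 - x) * (y ^ b / (1 - y))) := by
  have h := (hasSum_ite_le_pow hx a).mul_of_summable_norm (hasSum_ite_le_pow hy b)
    (summable_norm_ite_le_pow hx a) (summable_norm_ite_le_pow hy b)
  exact h

end TailGeometric

theorem stepFnR_mul_pow_mul_pow (x y : ℝ) (n m i j : ℕ) :
    stepFnR ((i : ℤ) + j + 1 - n - m) *
        (stepFnR ((i : ℤ) - n) + stepFnR ((i : ℤ) - m) +
          stepFnR ((j : ℤ) - n) + stepFnR ((j : ℤ) - m) - 2) * x ^ i * y ^ j =
      (if m ≤ i then x ^ i else 0) * (if n ≤ j then y ^ j else 0) +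
        (if n ≤ i then x ^ i else 0) * (if m ≤ j then y ^ j else 0) := by
  simp only [stepFnR]
  split_ifs <;> first | (exfalso; omega) | ring

/-- The generating function identity
`Σ_{i,j≥0} s_{i+j+1-n-m}(s_{i-n}+s_{i-m}+s_{j-n}+s_{j-m}-2) x^i y^j
  = (x^m y^n + x^n y^m)/((1-x)(1-y))` for `|x| < 1`, `|y| < 1`. -/
theorem stmt_13 (x y : ℝ) (hx : |x| < 1) (hy : |y| < 1) (n m : ℕ) :
    ∑' p : ℕ × ℕ,
        stepFnR ((p.1 : ℤ) + p.2 + 1 - n - m) *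
          (stepFnR ((p.1 : ℤ) - n) + stepFnR ((p.1 : ℤ) - m) +
            stepFnR ((p.2 : ℤ) - n) + stepFnR ((p.2 : ℤ) - m) - 2) *
          x ^ p.1 * y ^ p.2 =
      (x ^ m * y ^ n + x ^ n * y ^ m) / ((1 - x) * (1 - y)) := by
  rw [← Real.norm_eq_abs] at hx hy
  have hsum := (hasSum_ite_le_pow_mul_ite_le_pow hx hy m n).add
    (hasSum_ite_le_pow_mul_ite_le_pow hx hy n m)
  simp only [← stepFnR_mul_pow_mul_pow] at hsum
  rw [hsum.tsum_eq]
  field_simp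
end

section
/- Let A be a commutative differential ring extending a polynomial ring in variables w^{i,s} (s ≥ 0), with derivation ∂_x sending w^{i,s} to w^{i,s+1}, such that ker ∂_x = ℝ (the constants). Suppose Z ∈ A is homogeneous (for the grading with deg w^{i,s} = s) and satisfies Z² ∈ ∂_x(A). Then Z is a constant; in particular if Z has positive degree then Z = 0. -/
open MvPolynomial

namespace Stmt14Aux

variable {σ : Type*} [DecidableEq σ]

/-- The algebra map splitting off the variable `v₀`. -/
noncomputable def phi (v₀ : σ) : MvPolynomial σ ℝ →ₐ[ℝ] Polynomial (MvPolynomial σ ℝ) :=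
  MvPolynomial.aeval (fun u => if u = v₀ then Polynomial.X else Polynomial.C (MvPolynomial.X u))

lemma phi_monomial (v₀ : σ) (m : σ →₀ ℕ) (c : ℝ) (hm : m v₀ = 0) :
    phi v₀ (monomial m c) = Polynomial.C (monomial m c) := by
  rw [monomial_eq, map_mul]
  have h1 : phi v₀ (C c) = Polynomial.C (C c) := by
    simp [phi, algebraMap_eq]
  have h2 : phi v₀ (m.prod fun n e => (X n : MvPolynomial σ ℝ) ^ e)
      = Polynomial.C (m.prod fun n e => (X n : MvPolynomial σ ℝ) ^ e) := by
    unfold Finsupp.prod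
    rw [map_prod, map_prod (Polynomial.C : MvPolynomial σ ℝ →+* _)]
    refine Finset.prod_congr rfl fun u hu => ?_
    have hu0 : u ≠ v₀ := by
      rintro rfl
      simp [Finsupp.mem_support_iff, hm] at hu
    simp [phi, hu0]
  rw [h1, h2, ← map_mul]

lemma phi_mkD_monomial (v₀ vm : σ) (g : σ → MvPolynomial σ ℝ)
    (hg : ∀ u, phi v₀ (g u) = if u = vm then Polynomial.X else Polynomial.C (g u))
    (m : σ →₀ ℕ) (c : ℝ) (hm : m v₀ = 0) :
    (phi v₀ (mkDerivation ℝ g (monomial m c))).coeff 1 = pderiv vm (monomial m c) ∧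
      (phi v₀ (mkDerivation ℝ g (monomial m c))).natDegree ≤ 1 := by
  have key : phi v₀ (mkDerivation ℝ g (monomial m c)) =
      c • ∑ u ∈ m.support, Polynomial.C (monomial (m - Finsupp.single u 1) ((m u : ℝ))) *
        (if u = vm then Polynomial.X else Polynomial.C (g u)) := by
    rw [mkDerivation_monomial, map_smul, Finsupp.sum, map_sum]
    congr 1
    refine Finset.sum_congr rfl fun u hu => ?_
    rw [smul_eq_mul, map_mul, phi_monomial, hg]
    simp [Finsupp.tsub_apply, hm]
  constructor
  · rw [key, Polynomial.coeff_smul, Polynomial.finset_sum_coeff]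
    have hterm : ∀ u ∈ m.support,
        (Polynomial.C (monomial (m - Finsupp.single u 1) ((m u : ℝ))) *
          (if u = vm then Polynomial.X else Polynomial.C (g u))).coeff 1 =
        if u = vm then monomial (m - Finsupp.single u 1) ((m u : ℝ)) else 0 := by
      intro u _
      split_ifs with h
      · rw [Polynomial.coeff_C_mul, Polynomial.coeff_X_one, mul_one]
      · rw [← map_mul, Polynomial.coeff_C]
        simp
    rw [Finset.sum_congr rfl hterm, Finset.sum_ite_eq' m.support vm
      (fun u => monomial (m - Finsupp.single u 1) ((m u : ℝ)))]
    rw [pderiv_monomial]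
    split_ifs with h
    · rw [smul_monomial, smul_eq_mul]
    · have : m vm = 0 := Finsupp.notMem_support_iff.1 h
      simp [this]
  · rw [key, Algebra.smul_def, Polynomial.algebraMap_apply]
    refine le_trans (Polynomial.natDegree_C_mul_le _ _) ?_
    refine Polynomial.natDegree_sum_le_of_forall_le _ _ fun u _ => ?_
    split_ifs with h
    · refine le_trans (Polynomial.natDegree_mul_le) ?_
      simp [Polynomial.natDegree_X_le]
    · refine le_trans (Polynomial.natDegree_mul_le) ?_
      simp

lemma phi_mkD (v₀ vm : σ) (g : σ → MvPolynomial σ ℝ)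
    (hg : ∀ u, phi v₀ (g u) = if u = vm then Polynomial.X else Polynomial.C (g u))
    (F : MvPolynomial σ ℝ) (hF : ∀ m ∈ F.support, m v₀ = 0) :
    (phi v₀ (mkDerivation ℝ g F)).coeff 1 = pderiv vm F ∧
      (phi v₀ (mkDerivation ℝ g F)).natDegree ≤ 1 := by
  have hrep : phi v₀ (mkDerivation ℝ g F) =
      ∑ m ∈ F.support, phi v₀ (mkDerivation ℝ g (monomial m (F.coeff m))) := by
    conv_lhs => rw [F.as_sum]
    rw [map_sum, map_sum]
  constructor
  · rw [hrep, Polynomial.finset_sum_coeff]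
    conv_rhs => rw [F.as_sum]
    rw [map_sum]
    exact Finset.sum_congr rfl fun m hm =>
      (phi_mkD_monomial v₀ vm g hg m (F.coeff m) (hF m hm)).1
  · rw [hrep]
    exact Polynomial.natDegree_sum_le_of_forall_le _ _ fun m hm =>
      (phi_mkD_monomial v₀ vm g hg m (F.coeff m) (hF m hm)).2

lemma pderiv_ne_zero {F : MvPolynomial σ ℝ} {v : σ} (hv : v ∈ F.vars) :
    pderiv v F ≠ 0 := by
  obtain ⟨m, hmF, hmv⟩ := (mem_vars v).1 hv
  have hmv1 : 1 ≤ m v := Nat.one_le_iff_ne_zero.2 (Finsupp.mem_support_iff.1 hmv)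
  have hc : (pderiv v F).coeff (m - Finsupp.single v 1) = F.coeff m * (m v : ℝ) := by
    conv_lhs => rw [F.as_sum, map_sum]
    rw [coeff_sum]
    rw [Finset.sum_eq_single m]
    · rw [pderiv_monomial, coeff_monomial, if_pos rfl]
    · intro m' hm' hne
      rw [pderiv_monomial, coeff_monomial]
      split_ifs with h
      · by_cases h0 : m' v = 0
        · simp [h0]
        · exfalso
          apply hne
          ext a
          have ha := DFunLike.congr_fun h a
          simp only [Finsupp.tsub_apply, Finsupp.single_apply] at ha
          by_cases hav : a = v
          · rw [hav]
            have h1 : 1 ≤ m' v := Nat.one_le_iff_ne_zero.2 h0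
            have ha' : m' v - 1 = m v - 1 := by
              simpa using DFunLike.congr_fun h v
            omega
          · have hva : v ≠ a := fun h => hav h.symm
            simpa [hva] using ha
      · rfl
    · intro h; exact absurd hmF h
  intro h0
  rw [h0] at hc
  simp only [coeff_zero] at hc
  have : F.coeff m * (m v : ℝ) ≠ 0 := by
    refine mul_ne_zero (mem_support_iff.1 hmF) ?_
    exact Nat.cast_ne_zero.2 (by omega)
  exact this hc.symm

end Stmt14Aux

open MvPolynomial in
/-- In the ring of differential polynomials in the jet variables `w^{i,s}` (here
modelled by `MvPolynomial (Fin r × ℕ) ℝ`), with derivation `∂_x` sending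
`w^{i,s} ↦ w^{i,s+1}` (whose kernel consists of the constants), if `Z` is
homogeneous for the grading `deg w^{i,s} = s` and `Z² ∈ ∂_x(A)`, then `Z` is a
constant; in particular, if `Z` has positive degree then `Z = 0`. -/
theorem stmt_14 (r : ℕ) (Z : MvPolynomial (Fin r × ℕ) ℝ) (d : ℕ)
    (hZ : Z.IsWeightedHomogeneous (fun p : Fin r × ℕ => p.2) d)
    (h : ∃ F : MvPolynomial (Fin r × ℕ) ℝ,
      (mkDerivation ℝ fun p : Fin r × ℕ => (X (p.1, p.2 + 1) :
        MvPolynomial (Fin r × ℕ) ℝ)) F = Z ^ 2) :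
    (∃ c : ℝ, Z = C c) ∧ (0 < d → Z = 0) := by
  obtain ⟨F, hF⟩ := h
  suffices hZ0 : Z = 0 by
    exact ⟨⟨0, by rw [hZ0, map_zero]⟩, fun _ => hZ0⟩
  by_cases hv : F.vars = ∅
  · -- F is a constant, so Z ^ 2 = 0
    have hm0 : ∀ m ∈ F.support, m = 0 := by
      intro m hm
      ext a
      exact mem_support_notMem_vars_zero hm (by simp [hv])
    have hFC : F = C (F.coeff 0) := by
      ext m
      rcases eq_or_ne m 0 with rfl | hne
      · simp [coeff_C]
      · rw [coeff_C, if_neg fun h => hne h.symm]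
        by_contra hc
        exact hne (hm0 m (mem_support_iff.2 hc))
    rw [hFC, ← algebraMap_eq, Derivation.map_algebraMap] at hF
    exact pow_eq_zero_iff (n := 2) (by norm_num) |>.1 hF.symm
  · exfalso
    have hv' : F.vars.Nonempty := Finset.nonempty_iff_ne_empty.2 hv
    obtain ⟨v, hvF, hvmax⟩ := Finset.exists_max_image F.vars Prod.snd hv'
    set v₀ : Fin r × ℕ := (v.1, v.2 + 1) with hv₀def
    have hv₀ : v₀ ∉ F.vars := by
      intro hmem
      have := hvmax v₀ hmem
      simp [hv₀def] at this
    have hsup : ∀ m ∈ F.support, m v₀ = 0 := fun m hm =>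
      mem_support_notMem_vars_zero hm hv₀
    have hg : ∀ u : Fin r × ℕ,
        Stmt14Aux.phi v₀ ((X (u.1, u.2 + 1)) : MvPolynomial (Fin r × ℕ) ℝ) =
          if u = v then Polynomial.X
          else Polynomial.C (X (u.1, u.2 + 1) : MvPolynomial (Fin r × ℕ) ℝ) := by
      intro u
      simp only [Stmt14Aux.phi, aeval_X]
      by_cases hu : u = v
      · rw [if_pos (by simp [hv₀def, hu]), if_pos hu]
      · rw [if_neg, if_neg hu]
        simp only [hv₀def, Prod.ext_iff, not_and]
        intro h1 h2
        exact hu (Prod.ext h1 (by omega))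
    obtain ⟨hc1, hd1⟩ := Stmt14Aux.phi_mkD v₀ v _ hg F hsup
    rw [hF, map_pow] at hc1 hd1
    have hpne : pderiv v F ≠ 0 := Stmt14Aux.pderiv_ne_zero hvF
    have hcne : ((Stmt14Aux.phi v₀ Z) ^ 2).coeff 1 ≠ 0 := by rw [hc1]; exact hpne
    have h1le : 1 ≤ ((Stmt14Aux.phi v₀ Z) ^ 2).natDegree :=
      Polynomial.le_natDegree_of_ne_zero hcne
    rw [Polynomial.natDegree_pow] at h1le hd1
    omega
end

section
/- Fix integers r ≥ 1, 0 ≤ k < l ≤ r, and real constants a₀, …, a_r with p(λ) = Σ a_hλ^h. Let λ₁, …, λ_r be distinct nonzero reals, u_i = λ_i^{l-k}, f^i = -2(l-k)²λ_i^{2l-k-2}/P'(λ_i), and Q_m^{ii} = (λ_i^{m}p'(λ_i) - mλ_i^{m-1}p(λ_i))/(2P'(λ_i)²) transformed by the factor ((l-k)λ_i^{l-k-1})². Then the central invariants c_i = (Q̃_l^{ii} - u_i·Q̃_k^{ii})/(3(f^i)²), with Q̃_m^{ii} = ((l-k)λ_i^{l-k-1})²·Q_m^{ii}, equal c_i = p(λ_i)/(24(k-l)λ_i^{l-1}).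 -/
/-!
Writing `L = λ_i`, the `p'`-terms of `Q̃_l^{ii}` and `u_i Q̃_k^{ii}` are both `λ_i^l p'(λ_i)` times the
same factor, so they cancel because `u_i = λ_i^{l-k}`, and the numerator collapses to
`(k - l) λ_i^{l-1} p(λ_i)`. The factors `P'(λ_i)²` cancel against `(f^i)²`, and comparing powers of `λ_i`
(`2(l-k-1) + (l-1) = 2(2l-k-2) - (l-1)`) leaves `p(λ_i) / (24 (k-l) λ_i^{l-1})`.
-/

section Field

variable {K : Type*} [Field K]

theorem zpow_mul_sub_intCast_mul_zpow_sub_one_sub {L : K} (hL : L ≠ 0) (k l : ℤ) (A B : K) :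
    L ^ l * B - (l : K) * L ^ (l - 1) * A - L ^ (l - k) * (L ^ k * B - (k : K) * L ^ (k - 1) * A) =
      ((k - l : ℤ) : K) * L ^ (l - 1) * A := by
  have hl : L ^ l = L ^ (l - k) * L ^ k := by rw [← zpow_add₀ hL]; ring_nf
  have hl1 : L ^ (l - 1) = L ^ (l - k) * L ^ (k - 1) := by rw [← zpow_add₀ hL]; ring_nf
  rw [hl, hl1]
  push_cast
  ring

theorem centralInvariant_ratio {L P A d : K} (hL : L ≠ 0) (hP : P ≠ 0) (hd : d ≠ 0) (k l : ℤ) :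
    (d * L ^ (l - k - 1)) ^ 2 * (-d * L ^ (l - 1) * A / (2 * P ^ 2)) /
        (3 * (-2 * d ^ 2 * L ^ (2 * l - k - 2) / P) ^ 2) =
      A / (24 * -d * L ^ (l - 1)) := by
  have hexp : L ^ (2 * l - k - 2) = L ^ (l - k - 1) * L ^ (l - 1) := by
    rw [← zpow_add₀ hL]; ring_nf
  have hx : L ^ (l - k - 1) ≠ 0 := zpow_ne_zero _ hL
  have hy : L ^ (l - 1) ≠ 0 := zpow_ne_zero _ hL
  rw [hexp]
  field_simp
  ring

end Field

open Finset in
theorem stmt_19_general (r : ℕ) (k l : ℤ) (hkl : k < l)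
    (a : ℕ → ℝ) (lam : Fin r → ℝ) (hne : ∀ i, lam i ≠ 0)
    (hinj : Function.Injective lam) :
    let P' : Fin r → ℝ := fun i => ∏ j ∈ Finset.univ.erase i, (lam i - lam j)
    let p : ℝ → ℝ := fun x => ∑ h ∈ Finset.range (r + 1), a h * x ^ h
    let p' : ℝ → ℝ := fun x => ∑ h ∈ Finset.range (r + 1), (h : ℝ) * a h * x ^ (h - 1)
    let u : Fin r → ℝ := fun i => lam i ^ (l - k)
    let f : Fin r → ℝ := fun i =>
      -2 * ((l - k : ℤ) : ℝ) ^ 2 * lam i ^ (2 * l - k - 2) / P' i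
    let Q : ℤ → Fin r → ℝ := fun m i =>
      (lam i ^ m * p' (lam i) - ((m : ℤ) : ℝ) * lam i ^ (m - 1) * p (lam i)) /
        (2 * (P' i) ^ 2)
    let Qt : ℤ → Fin r → ℝ := fun m i =>
      (((l - k : ℤ) : ℝ) * lam i ^ (l - k - 1)) ^ 2 * Q m i
    ∀ i, (Qt l i - u i * Qt k i) / (3 * (f i) ^ 2) =
      p (lam i) / (24 * ((k - l : ℤ) : ℝ) * lam i ^ (l - 1)) := by
  intro P' p p' u f Q Qt i
  have hP' : P' i ≠ 0 :=
    prod_ne_zero_iff.2 fun j hj => sub_ne_zero.2 fun h => (mem_erase.1 hj).1 (hinj h).symm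
  have hlk : ((l - k : ℤ) : ℝ) ≠ 0 := by exact_mod_cast sub_ne_zero.2 hkl.ne'
  have hnum : Qt l i - u i * Qt k i = (((l - k : ℤ) : ℝ) * lam i ^ (l - k - 1)) ^ 2 *
      (-((l - k : ℤ) : ℝ) * lam i ^ (l - 1) * p (lam i) / (2 * P' i ^ 2)) := by
    have hcancel := zpow_mul_sub_intCast_mul_zpow_sub_one_sub (hne i) k l (p (lam i)) (p' (lam i))
    rw [show -((l - k : ℤ) : ℝ) = ((k - l : ℤ) : ℝ) by push_cast; ring, ← hcancel]
    simp only [Qt, Q, u]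
    ring
  rw [hnum, centralInvariant_ratio (hne i) hP' hlk k l]
  push_cast
  ring

open Finset in
/-- The central invariants of the bihamiltonian structure `B_{k,l}` of the
`r`-KdV-CH hierarchy: with `P'(λ_i) = ∏_{j≠i}(λ_i - λ_j)`,
`p(λ) = Σ_{h=0}^r a_h λ^h`, canonical coordinates `u_i = λ_i^{l-k}`, metric entries
`f^i = -2(l-k)² λ_i^{2l-k-2}/P'(λ_i)`, dispersive coefficients
`Q_m^{ii} = (λ_i^m p'(λ_i) - m λ_i^{m-1} p(λ_i))/(2 P'(λ_i)²)` and their transforms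
`Q̃_m^{ii} = ((l-k) λ_i^{l-k-1})² Q_m^{ii}`, the central invariants
`c_i = (Q̃_l^{ii} - u_i Q̃_k^{ii})/(3 (f^i)²)` equal `p(λ_i)/(24(k-l) λ_i^{l-1})`. -/
theorem stmt_19 (r : ℕ) (hr : 1 ≤ r) (k l : ℤ) (h0k : 0 ≤ k) (hkl : k < l)
    (hlr : l ≤ r) (a : ℕ → ℝ) (lam : Fin r → ℝ) (hne : ∀ i, lam i ≠ 0)
    (hinj : Function.Injective lam) :
    let P' : Fin r → ℝ := fun i => ∏ j ∈ Finset.univ.erase i, (lam i - lam j)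
    let p : ℝ → ℝ := fun x => ∑ h ∈ Finset.range (r + 1), a h * x ^ h
    let p' : ℝ → ℝ := fun x => ∑ h ∈ Finset.range (r + 1), (h : ℝ) * a h * x ^ (h - 1)
    let u : Fin r → ℝ := fun i => lam i ^ (l - k)
    let f : Fin r → ℝ := fun i =>
      -2 * ((l - k : ℤ) : ℝ) ^ 2 * lam i ^ (2 * l - k - 2) / P' i
    let Q : ℤ → Fin r → ℝ := fun m i =>
      (lam i ^ m * p' (lam i) - ((m : ℤ) : ℝ) * lam i ^ (m - 1) * p (lam i)) /
        (2 * (P' i) ^ 2)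
    let Qt : ℤ → Fin r → ℝ := fun m i =>
      (((l - k : ℤ) : ℝ) * lam i ^ (l - k - 1)) ^ 2 * Q m i
    ∀ i, (Qt l i - u i * Qt k i) / (3 * (f i) ^ 2) =
      p (lam i) / (24 * ((k - l : ℤ) : ℝ) * lam i ^ (l - 1)) :=
  stmt_19_general r k l hkl a lam hne hinj
end
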